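/- Exact probability that a given node is isolated in g(n,r,p) (step in the proof of Theorem 9). Fix n ≥ 1, r > 0, and p ∈ (0,1]. Then the probability that node v₁ is isolated (has no incident edges) in g(n,r,p) equals ∫_{S₀} (1 − ν(B(X,r)) p)^{n−1} dm(X). -/

import Mathlib

open MeasureTheory Metric Finset

noncomputable section

abbrev Pt : Type := EuclideanSpace ℝ (Fin 2)

def pt (x y : ℝ) : Pt := (WithLp.equiv 2 (Fin 2 → ℝ)).symm ![x, y]

def S0 : Set Pt := {X | X 0 ∈ Set.Icc (-(1:ℝ)/2) (1/2) ∧ X 1 ∈ Set.Icc (-(1:ℝ)/2) (1/2)}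

def gridPt (s : ℕ) (ij : Fin s × Fin s) : Pt :=
  pt (((ij.1 : ℝ) + 1/2) / s - 1/2) (((ij.2 : ℝ) + 1/2) / s - 1/2)

/-- The joint distribution of `n` nodes placed i.i.d. uniformly on `S₀`. -/
def μunif (n : ℕ) : Measure (Fin n → Pt) := Measure.pi fun _ => volume.restrict S0

/-- `ν(F)`: the area (Lebesgue measure) of `F ∩ S₀`. -/
def nu (F : Set Pt) : ℝ := (volume (F ∩ S0)).toReal

/-- Coverage probability of the random network `g(n, r)`. -/
def pcovRand (n : ℕ) (r : ℝ) : ℝ :=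
  (μunif n {ω | ∀ u ∈ S0, ∃ i, dist (ω i) u ≤ r}).toReal

/-- The Bernoulli(p) measure on Bool. -/
def bern (p : ℝ) : Measure Bool :=
  ENNReal.ofReal p • Measure.dirac true + ENNReal.ofReal (1 - p) • Measure.dirac false

/-- Sample space measure for `g(n, r, p)`: node positions are i.i.d. uniform on `S₀`,
and each unordered pair of nodes carries an independent Bernoulli(p) indicator. -/
def μgraph (n : ℕ) (p : ℝ) : Measure ((Fin n → Pt) × (Sym2 (Fin n) → Bool)) :=
  (Measure.pi fun _ : Fin n => volume.restrict S0).prod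
    (Measure.pi fun _ : Sym2 (Fin n) => bern p)

/-- Adjacency in `g(n, r, p)`: nodes `i ≠ j` are joined iff they are within distance `r`
and the pair's Bernoulli indicator equals `true`. -/
def adj (n : ℕ) (r : ℝ) (ω : (Fin n → Pt) × (Sym2 (Fin n) → Bool)) (i j : Fin n) : Prop :=
  i ≠ j ∧ dist (ω.1 i) (ω.1 j) ≤ r ∧ ω.2 s(i, j) = true

/-- Probability that `g(n, r, p)` is disconnected. -/
def pdisc (n : ℕ) (r p : ℝ) : ℝ :=
  (μgraph n p {ω | ¬ ∀ i j : Fin n, Relation.ReflTransGen (adj n r ω) i j}).toReal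

/-! Given the positions, the `n - 1` potential edges at `v₁` carry independent Bernoulli(p)
indicators, and the one towards `vⱼ` matters only when `Xⱼ ∈ B(X₁, r)`; so `v₁` is isolated
with conditional probability `∏ⱼ (1 - p · 1[Xⱼ ∈ B(X₁, r)])`. For fixed `X₁` the `Xⱼ` are
i.i.d. uniform on `S₀`, so integrating them out turns each factor into `1 - p ν(B(X₁, r))`. -/

open scoped ENNReal
open ProbabilityTheory

namespace MeasureTheory

theorem Measure.pi_forall_apply_mem_of_injective {ι κ α : Type*} [Fintype ι] [Fintype κ]
    [MeasurableSpace α] (μ : κ → Measure α) [∀ k, IsProbabilityMeasure (μ k)]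
    {g : ι → κ} (hg : Function.Injective g) (A : ι → Set α) :
    Measure.pi μ {b | ∀ i, b (g i) ∈ A i} = ∏ i, μ (g i) (A i) := by
  have hpi : {b : κ → α | ∀ i, b (g i) ∈ A i} = Set.univ.pi (g.extend A fun _ => Set.univ) := by
    ext b
    simp only [Set.mem_ofPred_eq, Set.mem_pi, Set.mem_univ, true_implies]
    refine ⟨fun h k => ?_, fun h i => hg.extend_apply A _ i ▸ h (g i)⟩
    by_cases hk : ∃ i, g i = k
    · obtain ⟨i, rfl⟩ := hk
      simpa [hg.extend_apply] using h i
    · simp [Function.extend_apply' _ _ _ hk]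
  rw [hpi, Measure.pi_pi]
  refine (Fintype.prod_of_injective g hg _ _ (fun k hk => ?_)
    fun i => by rw [hg.extend_apply]).symm
  rw [Function.extend_apply' _ _ _ hk, measure_univ]

theorem lintegral_fintype_prod_eq_pow {ι α : Type*} [Fintype ι] [MeasurableSpace α]
    (μ : Measure α) [IsProbabilityMeasure μ] {f : α → ℝ≥0∞} (hf : Measurable f) :
    ∫⁻ x, ∏ i, f (x i) ∂(Measure.pi fun _ : ι => μ) = (∫⁻ a, f a ∂μ) ^ Fintype.card ι := by
  rw [lintegral_prod_eq_prod_lintegral_of_indepFun _ _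
    (iIndepFun_pi (X := fun _ => f) fun _ => hf.aemeasurable)
    fun i => hf.comp (measurable_pi_apply i)]
  simp_rw [(measurePreserving_eval (fun _ : ι => μ) _).lintegral_comp hf]
  rw [Finset.prod_const, Finset.card_univ]

theorem lintegral_pi_prod_zero_succ_eq {α : Type*} [MeasurableSpace α]
    (μ : Measure α) [IsProbabilityMeasure μ] {f : α → α → ℝ≥0∞}
    (hf : Measurable (Function.uncurry f)) (m : ℕ) :
    ∫⁻ x, ∏ j : Fin m, f (x 0) (x j.succ) ∂(Measure.pi fun _ : Fin (m + 1) => μ)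
      = ∫⁻ a, (∫⁻ y, f a y ∂μ) ^ m ∂μ := by
  rw [← (measurePreserving_piFinSuccAbove (fun _ => μ) 0).symm.lintegral_comp_emb
    (MeasurableEquiv.measurableEmbedding _)]
  simp only [MeasurableEquiv.piFinSuccAbove_symm_apply, Fin.insertNthEquiv, Equiv.coe_fn_mk,
    Fin.insertNth_zero', Fin.cons_zero, Fin.cons_succ]
  rw [lintegral_prod _ (by fun_prop)]
  refine lintegral_congr fun a => ?_
  simpa using lintegral_fintype_prod_eq_pow (ι := Fin m) μ (hf.comp measurable_prodMk_left)

theorem lintegral_ite_mem_eq_ofReal {α : Type*} [MeasurableSpace α] (μ : Measure α)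
    [IsProbabilityMeasure μ] {B : Set α} [DecidablePred (· ∈ B)] (hB : MeasurableSet B) {p : ℝ}
    (hp1 : p ≤ 1) :
    ∫⁻ y, (if y ∈ B then ENNReal.ofReal (1 - p) else 1) ∂μ = ENNReal.ofReal (1 - p * μ.real B) := by
  rw [← lintegral_add_compl _ hB, setLIntegral_congr_fun hB fun y hy => if_pos hy,
    setLIntegral_congr_fun hB.compl fun y hy => if_neg hy, setLIntegral_const, setLIntegral_const,
    one_mul, prob_compl_eq_one_sub hB, ← ofReal_measureReal]
  have h0 : 0 ≤ μ.real B := measureReal_nonneg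
  have h1 : μ.real B ≤ 1 := measureReal_le_one
  rw [← ENNReal.ofReal_mul (by linarith), ← ENNReal.ofReal_one, ← ENNReal.ofReal_sub _ h0,
    ← ENNReal.ofReal_add (by nlinarith) (by linarith)]
  ring_nf

end MeasureTheory

open MeasureTheory

theorem measurableSet_mem_closedBall {α : Type*} [PseudoMetricSpace α] [MeasurableSpace α]
    [OpensMeasurableSpace α] [SecondCountableTopology α] (r : ℝ) :
    MeasurableSet {q : α × α | q.2 ∈ closedBall q.1 r} :=
  measurableSet_le (measurable_snd.dist measurable_fst) measurable_const

theorem measurableSet_S0 : MeasurableSet S0 := by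
  refine Measurable.setOf ?_
  fun_prop (disch := exact measurableSet_Icc)

theorem volume_S0 : volume S0 = 1 := by
  have hS0 : S0 = (MeasurableEquiv.toLp 2 (Fin 2 → ℝ)).symm ⁻¹'
      Set.univ.pi fun _ => Set.Icc (-(1:ℝ)/2) (1/2) := by
    ext X
    simp only [Set.mem_preimage, Set.mem_pi, Set.mem_univ, true_implies, Fin.forall_fin_two]
    rfl
  rw [hS0, (EuclideanSpace.volume_preserving_symm_measurableEquiv_toLp (Fin 2)).measure_preimage
    (MeasurableSet.univ_pi fun _ => measurableSet_Icc).nullMeasurableSet, volume_pi_pi]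
  norm_num [Real.volume_Icc]

instance : IsProbabilityMeasure (volume.restrict S0) :=
  ⟨by rw [Measure.restrict_apply_univ, volume_S0]⟩

theorem nu_eq_measureReal (F : Set Pt) : nu F = (volume.restrict S0).real F := by
  rw [measureReal_def, Measure.restrict_apply' measurableSet_S0, nu]

theorem one_sub_nu_mul_nonneg (F : Set Pt) {p : ℝ} (hp1 : p ≤ 1) :
    0 ≤ 1 - nu F * p := by
  rw [nu_eq_measureReal]
  nlinarith [measureReal_nonneg (μ := volume.restrict S0) (s := F),
    measureReal_le_one (μ := volume.restrict S0) (s := F)]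

theorem measurable_nu_closedBall (r : ℝ) : Measurable fun X : Pt => nu (closedBall X r) := by
  simp_rw [nu_eq_measureReal, measureReal_def]
  exact (measurable_measure_prodMk_left (measurableSet_mem_closedBall r)).ennreal_toReal

theorem bern_false (p : ℝ) : bern p {false} = ENNReal.ofReal (1 - p) := by
  simp [bern]

theorem isProbabilityMeasure_bern {p : ℝ} (hp0 : 0 ≤ p) (hp1 : p ≤ 1) :
    IsProbabilityMeasure (bern p) :=
  ⟨by simp [bern, ← ENNReal.ofReal_add hp0 (sub_nonneg.2 hp1)]⟩

theorem measurableSet_isolated (n : ℕ) (r : ℝ) (i : Fin n) :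
    MeasurableSet {ω | ∀ j, j ≠ i → ¬ adj n r ω i j} := by
  refine Measurable.setOf ?_
  unfold adj
  fun_prop

open Classical in
theorem measure_pi_bern_isolated_eq_prod {m : ℕ} {p : ℝ} (hp0 : 0 ≤ p) (hp1 : p ≤ 1) (r : ℝ)
    (x : Fin (m + 1) → Pt) :
    Measure.pi (fun _ : Sym2 (Fin (m + 1)) => bern p) {b | ∀ j, j ≠ 0 → ¬ adj (m + 1) r (x, b) 0 j}
      = ∏ j : Fin m, if x j.succ ∈ closedBall (x 0) r then ENNReal.ofReal (1 - p) else 1 := by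
  have := isProbabilityMeasure_bern hp0 hp1
  have hset : {b | ∀ j, j ≠ 0 → ¬ adj (m + 1) r (x, b) 0 j} =
      {b : Sym2 (Fin (m + 1)) → Bool | ∀ j : Fin m,
        b s(0, j.succ) ∈ if x j.succ ∈ closedBall (x 0) r then {false} else Set.univ} := by
    ext b
    simp only [ne_eq, adj, dist_comm, not_and, Bool.not_eq_true, Fin.forall_fin_succ,
      not_true_eq_false, dist_self, IsEmpty.forall_iff, Fin.succ_ne_zero,
      not_false_eq_true, forall_const, true_and, Set.mem_ofPred_eq, mem_closedBall, Bool.univ_eq]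
    refine forall_congr' fun j => ?_
    split_ifs with h <;> simp [h, (Fin.succ_ne_zero j).symm]
  rw [hset, Measure.pi_forall_apply_mem_of_injective _
    (fun j j' h => Fin.succ_injective _ (Sym2.congr_right.1 h))]
  refine Finset.prod_congr rfl fun j _ => ?_
  split_ifs
  · exact bern_false p
  · exact measure_univ

theorem isolated_node_probability_general
    (n : ℕ) (hn : 0 < n) (r : ℝ) (p : ℝ) (hp : p ∈ Set.Ioc (0:ℝ) 1) :
    (μgraph n p {ω | ∀ j : Fin n, j ≠ ⟨0, hn⟩ → ¬ adj n r ω ⟨0, hn⟩ j}).toReal =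
      ∫ X in S0, (1 - nu (closedBall X r) * p) ^ (n - 1) := by
  classical
  obtain ⟨hp0, hp1⟩ := hp
  obtain ⟨m, rfl⟩ : ∃ m, n = m + 1 := ⟨n - 1, (Nat.succ_pred_eq_of_pos hn).symm⟩
  have hweight : Measurable (Function.uncurry fun a y : Pt =>
      if y ∈ closedBall a r then ENNReal.ofReal (1 - p) else 1) :=
    Measurable.ite (measurableSet_mem_closedBall r) measurable_const measurable_const
  have hlaw : μgraph (m + 1) p {ω | ∀ j, j ≠ 0 → ¬ adj (m + 1) r ω 0 j}
      = ∫⁻ a, ENNReal.ofReal ((1 - nu (closedBall a r) * p) ^ m) ∂(volume.restrict S0) := by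
    rw [μgraph, Measure.prod_apply (measurableSet_isolated _ _ _)]
    simp_rw [Set.preimage_ofPred_eq, measure_pi_bern_isolated_eq_prod hp0.le hp1]
    rw [lintegral_pi_prod_zero_succ_eq _ hweight]
    refine lintegral_congr fun a => ?_
    rw [lintegral_ite_mem_eq_ofReal _ measurableSet_closedBall hp1, ← nu_eq_measureReal, mul_comm,
      ENNReal.ofReal_pow (one_sub_nu_mul_nonneg _ hp1)]
  rw [Fin.mk_zero, hlaw, Nat.add_sub_cancel, integral_eq_lintegral_of_nonneg_ae]
  · exact Filter.Eventually.of_forall fun X => pow_nonneg (one_sub_nu_mul_nonneg _ hp1) m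
  · exact (((measurable_nu_closedBall r).mul_const p).const_sub 1).pow_const m
      |>.aestronglyMeasurable

/-- Step in the proof of Theorem 9: the probability that node `v₁` is isolated in
`g(n, r, p)` equals `∫_{S₀} (1 - ν(B(X, r))·p)^(n-1) dm(X)`. -/
theorem isolated_node_probability
    (n : ℕ) (hn : 0 < n) (r : ℝ) (hr : 0 < r) (p : ℝ) (hp : p ∈ Set.Ioc (0:ℝ) 1) :
    (μgraph n p {ω | ∀ j : Fin n, j ≠ ⟨0, hn⟩ → ¬ adj n r ω ⟨0, hn⟩ j}).toReal =
      ∫ X in S0, (1 - nu (closedBall X r) * p) ^ (n - 1) :=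
  isolated_node_probability_general n hn r p hp

end
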